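/- arXiv:math/0405011 — 2 statements merged into one kernel-verified Lean document; each statement's English description precedes it below -/
import Mathlib

section
/- Let N ≥ 2 be an integer, let n > 0 be a real number, let p_1, …, p_N be nonnegative integers with p_1 ≤ p_2 + ⋯ + p_N, and let μ_1, …, μ_N be nonnegative real numbers satisfying μ_i ≤ μ_1 for all i and μ_i ≤ μ_2 for all i ≥ 2. If Σ_{i=1}^N p_i μ_i > n·(Σ_{i=1}^N p_i + 1), then μ_1 + μ_2 > 2n. -/
/-!
Argue by contradiction. Since `μ₂ ≤ μ₁`, the bound `μ₁ + μ₂ ≤ 2n` forces `μ₂ ≤ n`, and the tail of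
the sum is at most `Q μ₂` with `Q = p₂ + ⋯ + p_N`. Writing
`p₁ μ₁ + Q μ₂ = p₁ (μ₁ + μ₂) + (Q - p₁) μ₂` and using `p₁ ≤ Q`, the whole sum is at most
`2n p₁ + n (Q - p₁) = n (p₁ + Q)`, which is below `n (p₁ + Q + 1)`.
-/

open Finset

theorem Finset.sum_mul_le_sum_mul_of_le {ι R : Type*} [Semiring R] [PartialOrder R]
    [IsOrderedRing R] (s : Finset ι) {w f : ι → R} {M : R} (hw : ∀ i ∈ s, 0 ≤ w i)
    (hf : ∀ i ∈ s, f i ≤ M) : ∑ i ∈ s, w i * f i ≤ (∑ i ∈ s, w i) * M := by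
  rw [sum_mul]
  exact sum_le_sum fun i hi => mul_le_mul_of_nonneg_left (hf i hi) (hw i hi)

theorem mul_add_mul_le_of_add_le_two_mul {K : Type*} [Field K] [LinearOrder K]
    [IsStrictOrderedRing K] {P Q a b n : K} (hP : 0 ≤ P) (hPQ : P ≤ Q)
    (hba : b ≤ a) (hab : a + b ≤ 2 * n) : P * a + Q * b ≤ n * (P + Q) :=
  calc P * a + Q * b = P * (a + b) + (Q - P) * b := by ring
    _ ≤ P * (2 * n) + (Q - P) * n := by
        gcongr
        linarith
    _ = n * (P + Q) := by ring

theorem Finset.sum_Icc_one_eq_add_sum_Icc_two {M : Type*} [AddCommMonoid M] (f : ℕ → M)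
    {N : ℕ} (hN : 1 ≤ N) : ∑ i ∈ Icc 1 N, f i = f 1 + ∑ i ∈ Icc 2 N, f i := by
  rw [← add_sum_Ioc_eq_sum_Icc hN, ← Icc_add_one_left_eq_Ioc, one_add_one_eq_two]

theorem stmt_0_general (N : ℕ) (hN : 2 ≤ N) (n : ℝ) (hn : 0 < n)
    (p : ℕ → ℕ) (μ : ℕ → ℝ)
    (hp1 : p 1 ≤ ∑ i ∈ Finset.Icc 2 N, p i)
    (hμ1 : ∀ i ∈ Finset.Icc 1 N, μ i ≤ μ 1)
    (hμ2 : ∀ i ∈ Finset.Icc 2 N, μ i ≤ μ 2)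
    (hNF : ∑ i ∈ Finset.Icc 1 N, (p i : ℝ) * μ i
            > n * ((∑ i ∈ Finset.Icc 1 N, (p i : ℝ)) + 1)) :
    μ 1 + μ 2 > 2 * n := by
  by_contra! hsum
  set Q : ℝ := ∑ i ∈ Icc 2 N, (p i : ℝ)
  have htail : ∑ i ∈ Icc 2 N, (p i : ℝ) * μ i ≤ Q * μ 2 :=
    sum_mul_le_sum_mul_of_le _ (fun i _ => Nat.cast_nonneg (p i)) hμ2
  have hpQ : (p 1 : ℝ) ≤ Q := by
    simpa only [Q, Nat.cast_sum] using (Nat.cast_le (α := ℝ)).mpr hp1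
  have hμ21 : μ 2 ≤ μ 1 := hμ1 2 (mem_Icc.mpr ⟨by norm_num, hN⟩)
  have hbound := mul_add_mul_le_of_add_le_two_mul (Nat.cast_nonneg (p 1)) hpQ hμ21 hsum
  rw [sum_Icc_one_eq_add_sum_Icc_two _ (by omega),
    sum_Icc_one_eq_add_sum_Icc_two _ (by omega)] at hNF
  linarith

/-- Arithmetic core of Proposition 9: if `N ≥ 2`, `n > 0`,
`p 1, …, p N` are nonnegative integers with `p 1 ≤ p 2 + ⋯ + p N`,
and `μ 1, …, μ N` are nonnegative reals with `μ i ≤ μ 1` for all `i`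
and `μ i ≤ μ 2` for all `i ≥ 2`, then
`∑ p i * μ i > n * (∑ p i + 1)` implies `μ 1 + μ 2 > 2 n`. -/
theorem stmt_0 (N : ℕ) (hN : 2 ≤ N) (n : ℝ) (hn : 0 < n)
    (p : ℕ → ℕ) (μ : ℕ → ℝ)
    (hμnonneg : ∀ i ∈ Finset.Icc 1 N, 0 ≤ μ i)
    (hp1 : p 1 ≤ ∑ i ∈ Finset.Icc 2 N, p i)
    (hμ1 : ∀ i ∈ Finset.Icc 1 N, μ i ≤ μ 1)
    (hμ2 : ∀ i ∈ Finset.Icc 2 N, μ i ≤ μ 2)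
    (hNF : ∑ i ∈ Finset.Icc 1 N, (p i : ℝ) * μ i
            > n * ((∑ i ∈ Finset.Icc 1 N, (p i : ℝ)) + 1)) :
    μ 1 + μ 2 > 2 * n :=
  stmt_0_general N hN n hn p μ hp1 hμ1 hμ2 hNF
end

section
/- Let N ≥ 2 and let r be a relation on {1, …, N} such that r(i, j) holds only if j < i. For each i ∈ {1, …, N} let P(N, i) denote the set of finite sequences N = v_0, v_1, …, v_k = i with r(v_t, v_{t+1}) for all 0 ≤ t < k (such sequences are strictly decreasing, so each P(N, i) is a finite set), and set p_i = |P(N, i)| (so p_N = 1). Let n > 0 be a real number and let μ_1 ≥ μ_2 ≥ ⋯ ≥ μ_N ≥ 0 be real numbers. If Σ_{i=1}^N p_i μ_i > n·(Σ_{i=1}^N p_i + 1), then μ_1 + μ_2 > 2n. -/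
/-!
Every path from `N` to `1` is a path from `N` to some `j ∈ (1, N]` followed by one arrow,
so `p₁ ≤ ∑_{i=2}^N p_i =: S`. If `μ₁ + μ₂ ≤ 2n`, then `μ₂ ≤ n`, and by monotonicity
`∑ pᵢ μᵢ ≤ p₁ μ₁ + S μ₂ = p₁ (μ₁ + μ₂) + (S - p₁) μ₂ ≤ 2n p₁ + (S - p₁) n = n (p₁ + S)`,
which contradicts the Noether–Fano inequality since `n > 0`.
-/

/-- The set of paths from `a` to `b` along the relation `r`: finite sequences
`a = v 0, v 1, …, v k = b` with `r (v t) (v (t+1))` for all `0 ≤ t < k`,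
encoded as lists with head `a`, last element `b`, whose consecutive entries
are related by `r`. -/
def pathSet (r : ℕ → ℕ → Prop) (a b : ℕ) : Set (List ℕ) :=
  {l | l.Chain' r ∧ l.head? = some a ∧ l.getLast? = some b}

section pathSet

variable {r : ℕ → ℕ → Prop} {a b c : ℕ} {l : List ℕ}

theorem pairwise_gt_of_mem_pathSet (hlt : ∀ i j, r i j → j < i) (hl : l ∈ pathSet r a b) :
    l.Pairwise (· > ·) :=
  List.isChain_iff_pairwise.mp (hl.1.imp fun {_ _} h => hlt _ _ h)

theorem le_of_mem_of_mem_pathSet (hlt : ∀ i j, r i j → j < i) (hl : l ∈ pathSet r a b)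
    {x : ℕ} (hx : x ∈ l) : x ≤ a := by
  have hsorted := pairwise_gt_of_mem_pathSet hlt hl
  obtain ⟨-, hhead, -⟩ := hl
  cases l with
  | nil => simp at hx
  | cons y t =>
    obtain rfl : y = a := by simpa using hhead
    rcases List.mem_cons.mp hx with rfl | hx
    · exact le_rfl
    · exact (List.rel_of_pairwise_cons hsorted hx).le

theorem pathSet_finite (hlt : ∀ i j, r i j → j < i) (a b : ℕ) : (pathSet r a b).Finite := by
  refine Set.Finite.of_finite_image (f := List.toFinset)
    ((Finset.range (a + 1)).powerset.finite_toSet.subset ?_) fun l₁ h₁ l₂ h₂ he => ?_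
  · rintro _ ⟨l, hl, rfl⟩
    simp only [Finset.mem_coe, Finset.mem_powerset]
    intro x hx
    simpa [Nat.lt_succ_iff] using le_of_mem_of_mem_pathSet hlt hl (List.mem_toFinset.mp hx)
  · -- a strictly decreasing list is determined by its set of entries
    have hs₁ := pairwise_gt_of_mem_pathSet hlt h₁
    have hs₂ := pairwise_gt_of_mem_pathSet hlt h₂
    exact List.Perm.eq_of_pairwise (fun _ _ _ _ h h' => absurd h (lt_asymm h')) hs₁ hs₂
      (List.perm_of_nodup_nodup_toFinset_eq hs₁.nodup hs₂.nodup he)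

theorem exists_dropLast_mem_pathSet (hl : l ∈ pathSet r a c) (hac : a ≠ c) :
    ∃ b, r b c ∧ l.dropLast ∈ pathSet r a b := by
  obtain ⟨hchain, hhead, hlast⟩ := hl
  have hsplit : l.dropLast ++ [c] = l := List.dropLast_append_getLast? c hlast
  have hne : l.dropLast ≠ [] := by
    intro h
    rw [h, List.nil_append] at hsplit
    simp only [← hsplit, List.head?_cons, Option.some.injEq] at hhead
    exact hac hhead.symm
  rw [← hsplit] at hchain hhead
  obtain ⟨hchain, -, hrel⟩ := List.isChain_append.mp hchain
  have hlast' := List.getLast?_eq_some_getLast hne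
  refine ⟨_, hrel _ hlast' c rfl, hchain, ?_, hlast'⟩
  rwa [List.head?_append_of_ne_nil _ hne] at hhead

theorem ncard_pathSet_le_sum (hlt : ∀ i j, r i j → j < i) (hac : a ≠ c) {s : Finset ℕ}
    (hs : ∀ b, r b c → b ≤ a → b ∈ s) :
    (pathSet r a c).ncard ≤ ∑ b ∈ s, (pathSet r a b).ncard := by
  refine le_trans ?_ (s.set_ncard_biUnion_le _)
  refine Set.ncard_le_ncard_of_injOn List.dropLast (fun l hl => ?_) (fun l₁ h₁ l₂ h₂ he => ?_)
    (s.finite_toSet.biUnion fun b _ => pathSet_finite hlt a b)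
  · obtain ⟨b, hbc, hb⟩ := exists_dropLast_mem_pathSet hl hac
    have hba : b ≤ a := le_of_mem_of_mem_pathSet hlt hb (List.mem_of_getLast? hb.2.2)
    exact Set.mem_biUnion (hs b hbc hba) hb
  · rw [← List.dropLast_append_getLast? c h₁.2.2, ← List.dropLast_append_getLast? c h₂.2.2]
    exact congrArg (· ++ [c]) he

end pathSet

theorem add_sum_mul_le_of_le {ι : Type*} (s : Finset ι) {p μ : ι → ℝ} {p₀ μ₀ m n : ℝ}
    (hp : ∀ i ∈ s, 0 ≤ p i) (hμ : ∀ i ∈ s, μ i ≤ m) (hp₀ : 0 ≤ p₀)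
    (hp₀s : p₀ ≤ ∑ i ∈ s, p i) (hm : m ≤ μ₀) (hμ₀m : μ₀ + m ≤ 2 * n) :
    p₀ * μ₀ + ∑ i ∈ s, p i * μ i ≤ n * (p₀ + ∑ i ∈ s, p i) := by
  have htail : ∑ i ∈ s, p i * μ i ≤ (∑ i ∈ s, p i) * m := by
    rw [Finset.sum_mul]
    exact Finset.sum_le_sum fun i hi => mul_le_mul_of_nonneg_left (hμ i hi) (hp i hi)
  have hmn : m ≤ n := by linarith
  nlinarith [mul_le_mul_of_nonneg_left hμ₀m hp₀,
    mul_le_mul_of_nonneg_left hmn (sub_nonneg.mpr hp₀s)]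

theorem stmt_1_general (N : ℕ) (hN : 2 ≤ N) (r : ℕ → ℕ → Prop)
    (hlt : ∀ i j, r i j → j < i)
    (n : ℝ) (hn : 0 < n) (μ : ℕ → ℝ)
    (hmono : ∀ i j, 1 ≤ i → i ≤ j → j ≤ N → μ j ≤ μ i)
    (hNF : ∑ i ∈ Finset.Icc 1 N, (Nat.card (pathSet r N i) : ℝ) * μ i
            > n * ((∑ i ∈ Finset.Icc 1 N, (Nat.card (pathSet r N i) : ℝ)) + 1)) :
    μ 1 + μ 2 > 2 * n := by
  by_contra! hμ
  set p : ℕ → ℝ := fun i => (Nat.card (pathSet r N i) : ℝ)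
  have hcount : p 1 ≤ ∑ i ∈ Finset.Ioc 1 N, p i := by
    have := ncard_pathSet_le_sum hlt (by omega : N ≠ 1) (s := Finset.Ioc 1 N)
      fun b hb hbN => Finset.mem_Ioc.mpr ⟨hlt b 1 hb, hbN⟩
    simp only [p, Nat.card_coe_set_eq]
    exact_mod_cast this
  have hbound := add_sum_mul_le_of_le (Finset.Ioc 1 N) (fun i _ => Nat.cast_nonneg _)
    (fun i hi => hmono 2 i (by omega) (Finset.mem_Ioc.mp hi).1 (Finset.mem_Ioc.mp hi).2)
    (Nat.cast_nonneg _) hcount (hmono 1 2 le_rfl (by omega) hN) hμ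
  rw [← Finset.add_sum_Ioc_eq_sum_Icc (by omega), ← Finset.add_sum_Ioc_eq_sum_Icc (by omega)]
    at hNF
  linarith

/-- Proposition 9 in graph-combinatorial form: for a relation `r` on `{1, …, N}`
holding only when the second argument is smaller, `p i = |P(N, i)|` the number of
paths from `N` to `i`, `n > 0`, and `μ 1 ≥ μ 2 ≥ ⋯ ≥ μ N ≥ 0`, the log
Noether–Fano inequality `∑ p i * μ i > n * (∑ p i + 1)` implies `μ 1 + μ 2 > 2 n`. -/
theorem stmt_1 (N : ℕ) (hN : 2 ≤ N) (r : ℕ → ℕ → Prop)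
    (hdom : ∀ i j, r i j → i ∈ Finset.Icc 1 N ∧ j ∈ Finset.Icc 1 N)
    (hlt : ∀ i j, r i j → j < i)
    (n : ℝ) (hn : 0 < n) (μ : ℕ → ℝ)
    (hmono : ∀ i j, 1 ≤ i → i ≤ j → j ≤ N → μ j ≤ μ i)
    (hμN : 0 ≤ μ N)
    (hNF : ∑ i ∈ Finset.Icc 1 N, (Nat.card (pathSet r N i) : ℝ) * μ i
            > n * ((∑ i ∈ Finset.Icc 1 N, (Nat.card (pathSet r N i) : ℝ)) + 1)) :
    μ 1 + μ 2 > 2 * n :=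
  stmt_1_general N hN r hlt n hn μ hmono hNF
end
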